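/- arXiv:2212.07523 — 2 statements merged into one kernel-verified Lean document; each statement's English description precedes it below -/
import Mathlib

section
/- Let Σ be a set, and let g, h : Σ → [0,1]. If the relations σ ≺_g σ' ⟺ g(σ') < g(σ) and σ ≺_h σ' ⟺ h(σ') < h(σ) are both well-founded on Σ, then the relation induced by the pointwise minimum f(σ) = min(g(σ), h(σ)), namely σ ≺_f σ' ⟺ f(σ') < f(σ), is also well-founded on Σ. -/
/-! The values of `min g h` lie in `range g ∪ range h`, and a union of two sets on which `>` is
well-founded is again such a set (an infinite ascending sequence in the union has an infinite
ascending subsequence in one of the two). -/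

open Set Function

theorem range_min_subset_union {α β : Type*} [LinearOrder β] (f g : α → β) :
    range (fun a => min (f a) (g a)) ⊆ range f ∪ range g :=
  range_subset_iff.2 fun a =>
    (min_choice (f a) (g a)).imp (fun h => ⟨a, h.symm⟩) (fun h => ⟨a, h.symm⟩)

theorem wellFounded_gt_on_min {α β : Type*} [LinearOrder β] {f g : α → β}
    (hf : WellFounded ((· > ·) on f)) (hg : WellFounded ((· > ·) on g)) :
    WellFounded ((· > ·) on fun a => min (f a) (g a)) := by
  rw [← wellFoundedOn_range] at hf hg ⊢
  exact (hf.union hg).subset (range_min_subset_union f g)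

theorem wellFounded_min_general
    {L : Type*} (g h : L → ℝ)
    (hwg : WellFounded (fun σ σ' : L => g σ' < g σ))
    (hwh : WellFounded (fun σ σ' : L => h σ' < h σ)) :
    WellFounded (fun σ σ' : L => min (g σ') (h σ') < min (g σ) (h σ)) :=
  wellFounded_gt_on_min hwg hwh

/-- if the preference relations induced by `g, h : Σ → [0,1]` are both
well-founded, then the preference relation induced by the pointwise minimum
`f(σ) = min(g(σ), h(σ))` is also well-founded. -/
theorem wellFounded_min
    {L : Type*} (g h : L → ℝ)
    (hg : ∀ σ, g σ ∈ Set.Icc (0:ℝ) 1) (hh : ∀ σ, h σ ∈ Set.Icc (0:ℝ) 1)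
    (hwg : WellFounded (fun σ σ' : L => g σ' < g σ))
    (hwh : WellFounded (fun σ σ' : L => h σ' < h σ)) :
    WellFounded (fun σ σ' : L => min (g σ') (h σ') < min (g σ) (h σ)) :=
  wellFounded_min_general g h hwg hwh
end

section
/- Let Σ be a set, and let g, h : Σ → [0,1]. If the relations σ ≺_g σ' ⟺ g(σ') < g(σ) and σ ≺_h σ' ⟺ h(σ') < h(σ) are both well-founded on Σ, then the relation induced by the pointwise maximum f(σ) = max(g(σ), h(σ)), namely σ ≺_f σ' ⟺ f(σ') < f(σ), is also well-founded on Σ. -/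
open Function Set

theorem WellFounded.onFun_of_forall_eq_or_eq {α L : Type*} {r : α → α → Prop}
    [IsStrictOrder α r] {f g k : L → α} (hk : ∀ σ, k σ = f σ ∨ k σ = g σ)
    (hf : WellFounded (r on f)) (hg : WellFounded (r on g)) : WellFounded (r on k) := by
  rw [← wellFoundedOn_range] at hf hg ⊢
  refine (hf.union hg).subset (range_subset_iff.2 fun σ => ?_)
  rcases hk σ with h | h
  · exact Or.inl ⟨σ, h.symm⟩
  · exact Or.inr ⟨σ, h.symm⟩

theorem wellFounded_max_general
    {L : Type*} (g h : L → ℝ)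
    (hwg : WellFounded (fun σ σ' : L => g σ' < g σ))
    (hwh : WellFounded (fun σ σ' : L => h σ' < h σ)) :
    WellFounded (fun σ σ' : L => max (g σ') (h σ') < max (g σ) (h σ)) :=
  WellFounded.onFun_of_forall_eq_or_eq (r := (· > ·)) (fun σ => max_choice (g σ) (h σ)) hwg hwh

/-- if the preference relations induced by `g, h : Σ → [0,1]` are both
well-founded, then the preference relation induced by the pointwise maximum
`f(σ) = max(g(σ), h(σ))` is also well-founded. -/
theorem wellFounded_max
    {L : Type*} (g h : L → ℝ)
    (hg : ∀ σ, g σ ∈ Set.Icc (0:ℝ) 1) (hh : ∀ σ, h σ ∈ Set.Icc (0:ℝ) 1)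
    (hwg : WellFounded (fun σ σ' : L => g σ' < g σ))
    (hwh : WellFounded (fun σ σ' : L => h σ' < h σ)) :
    WellFounded (fun σ σ' : L => max (g σ') (h σ') < max (g σ) (h σ)) :=
  wellFounded_max_general g h hwg hwh
end
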